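/- Let k ≥ 1 be an integer, let ρ > k be a real number, and let μ > 0 satisfy μ f_{k−1}(μ)/f_k(μ) = ρ. Then μ > ρ − k. -/

import Mathlib

/-- `fpois j μ = ∑_{i ≥ j} e^{−μ} μ^i / i!`, the probability that a Poisson(μ)
random variable is at least `j`. -/
noncomputable def fpois (j : ℕ) (μ : ℝ) : ℝ :=
  ∑' i : ℕ, if j ≤ i then Real.exp (-μ) * μ ^ i / (Nat.factorial i) else 0

/-! With `p_i = e^{−μ} μ^i / i!`, peel off the first term: `f_{k−1} = p_{k−1} + f_k`.
Since `μ p_{k−1} = k p_k` and `p_k < f_k` (as `f_{k+1} > 0`), `μ f_{k−1} < (μ + k) f_k`,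
i.e. `ρ < μ + k`. -/

open Real

noncomputable def poissonTerm (μ : ℝ) (i : ℕ) : ℝ :=
  exp (-μ) * μ ^ i / i.factorial

lemma fpois_eq_tsum (j : ℕ) (μ : ℝ) :
    fpois j μ = ∑' i, if j ≤ i then poissonTerm μ i else 0 :=
  rfl

lemma summable_poissonTerm (μ : ℝ) : Summable (poissonTerm μ) :=
  (summable_pow_div_factorial μ).mul_left (exp (-μ)) |>.congr fun _ => (mul_div_assoc ..).symm

lemma summable_fpois_terms (j : ℕ) (μ : ℝ) :
    Summable fun i => if j ≤ i then poissonTerm μ i else 0 :=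
  (summable_poissonTerm μ).indicator {i | j ≤ i} |>.congr fun i => by
    simp only [Set.indicator_apply, Set.mem_ofPred_eq]

lemma fpois_eq_poissonTerm_add_fpois_succ (j : ℕ) (μ : ℝ) :
    fpois j μ = poissonTerm μ j + fpois (j + 1) μ := by
  rw [fpois_eq_tsum, (summable_fpois_terms j μ).tsum_eq_add_tsum_ite j, if_pos le_rfl,
    fpois_eq_tsum]
  congr 1
  refine tsum_congr fun i => ?_
  split_ifs <;> first | rfl | omega

lemma poissonTerm_pos {μ : ℝ} (hμ : 0 < μ) (i : ℕ) : 0 < poissonTerm μ i := by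
  unfold poissonTerm
  positivity

lemma fpois_pos {μ : ℝ} (hμ : 0 < μ) (j : ℕ) : 0 < fpois j μ := by
  rw [fpois_eq_tsum]
  refine (summable_fpois_terms j μ).tsum_pos (fun i => ?_) j ?_
  · split_ifs
    exacts [(poissonTerm_pos hμ i).le, le_rfl]
  · simpa using poissonTerm_pos hμ j

lemma mul_poissonTerm (μ : ℝ) (m : ℕ) :
    μ * poissonTerm μ m = (m + 1) * poissonTerm μ (m + 1) := by
  simp only [poissonTerm, Nat.factorial_succ, Nat.cast_mul, Nat.cast_succ, pow_succ]
  field_simp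

lemma mul_fpois_lt {μ : ℝ} (hμ : 0 < μ) (m : ℕ) :
    μ * fpois m μ < (μ + (m + 1)) * fpois (m + 1) μ := by
  have hterm : poissonTerm μ (m + 1) < fpois (m + 1) μ := by
    rw [fpois_eq_poissonTerm_add_fpois_succ (m + 1)]
    exact lt_add_of_pos_right _ (fpois_pos hμ _)
  calc μ * fpois m μ = (m + 1) * poissonTerm μ (m + 1) + μ * fpois (m + 1) μ := by
        rw [fpois_eq_poissonTerm_add_fpois_succ m, mul_add, mul_poissonTerm]
    _ < (m + 1) * fpois (m + 1) μ + μ * fpois (m + 1) μ := by gcongr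
    _ = (μ + (m + 1)) * fpois (m + 1) μ := by ring

theorem stmt13_general (k : ℕ) (hk : 1 ≤ k) (ρ : ℝ)
    (μ : ℝ) (hμ : 0 < μ) (heq : μ * fpois (k - 1) μ / fpois k μ = ρ) :
    ρ - k < μ := by
  obtain ⟨m, rfl⟩ : ∃ m, k = m + 1 := ⟨k - 1, by omega⟩
  rw [Nat.add_sub_cancel, div_eq_iff (fpois_pos hμ _).ne'] at heq
  have hlt := mul_fpois_lt hμ m
  rw [heq] at hlt
  have hρ : ρ < μ + (m + 1) := lt_of_mul_lt_mul_right hlt (fpois_pos hμ _).le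
  push_cast
  linarith

theorem stmt13 (k : ℕ) (hk : 1 ≤ k) (ρ : ℝ) (hρ : (k : ℝ) < ρ)
    (μ : ℝ) (hμ : 0 < μ) (heq : μ * fpois (k - 1) μ / fpois k μ = ρ) :
    ρ - k < μ :=
  stmt13_general k hk ρ μ hμ heq
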